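/- arXiv:1709.03059 — 2 statements merged into one kernel-verified Lean document; each statement's English description precedes it below -/
import Mathlib

section
/- Let R be a symplectic curvature tensor on ℝ^{2n}. Define Φ_{bd} := (1/(2(n+1))) ∑_a R_{ab}{}^a{}_d and define V_{ab}{}^c{}_d := R_{ab}{}^c{}_d − (δ_a{}^c Φ_{bd} − δ_b{}^c Φ_{ad} + ω_{ad} ∑_e Φ_{be} ω^{ce} − ω_{bd} ∑_e Φ_{ae} ω^{ce} + 2 ω_{ab} ∑_e Φ_{de} ω^{ce}). Then: (1) Φ is symmetric, Φ_{bd} = Φ_{db}; (2) V is totally trace-free in the sense that ∑_a V_{ab}{}^a{}_d = 0 for all b, d; and (3) Φ_{bd} = (1/(4(n+1))) ∑_{a,c,e} ω^{ae} R_{ae}{}^c{}_b ω_{cd}. -/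
open Finset

/-- The standard symplectic matrix `ω_{ab}` on `ℝ^{2n}`:
`ω(e_i, e_{n+i}) = 1 = -ω(e_{n+i}, e_i)` for `1 ≤ i ≤ n`, all other entries zero. -/
def stdOmega (n : ℕ) (a b : Fin (2 * n)) : ℝ :=
  if (a : ℕ) + n = (b : ℕ) then 1 else if (b : ℕ) + n = (a : ℕ) then -1 else 0

lemma stdOmega_eq (n : ℕ) (a b : Fin (2 * n)) : stdOmega n a b =
    if (a : ℕ) + n = (b : ℕ) then 1 else if (b : ℕ) + n = (a : ℕ) then -1 else 0 := rfl

lemma stdOmega_skew (n : ℕ) (a b : Fin (2 * n)) : stdOmega n a b = - stdOmega n b a := by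
  have ha := a.isLt
  rw [stdOmega_eq, stdOmega_eq]
  split_ifs
  any_goals norm_num
  all_goals exfalso
  all_goals omega

lemma stdOmega_orth (n : ℕ) (a c : Fin (2 * n)) :
    ∑ b, stdOmega n a b * stdOmega n c b = if a = c then 1 else 0 := by
  have ha := a.isLt
  have hc := c.isLt
  rcases lt_or_ge (a : ℕ) n with h | h
  · have hb : (a : ℕ) + n < 2 * n := by omega
    rw [Finset.sum_eq_single (⟨(a : ℕ) + n, hb⟩ : Fin (2 * n))]
    · simp only [stdOmega_eq, Fin.val_mk, Fin.ext_iff]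
      split_ifs
      any_goals norm_num
      all_goals exfalso
      all_goals omega
    · intro b _ hbne
      have hbne' : (b : ℕ) ≠ (a : ℕ) + n := by simpa [Fin.ext_iff] using hbne
      have hb2 := b.isLt
      simp only [stdOmega_eq, Fin.val_mk]
      split_ifs
      any_goals norm_num
      all_goals exfalso
      all_goals omega
    · simp
  · have hb : (a : ℕ) - n < 2 * n := by omega
    rw [Finset.sum_eq_single (⟨(a : ℕ) - n, hb⟩ : Fin (2 * n))]
    · simp only [stdOmega_eq, Fin.val_mk, Fin.ext_iff]
      split_ifs
      any_goals norm_num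
      all_goals exfalso
      all_goals omega
    · intro b _ hbne
      have hbne' : (b : ℕ) ≠ (a : ℕ) - n := by simpa [Fin.ext_iff] using hbne
      have hb2 := b.isLt
      simp only [stdOmega_eq, Fin.val_mk]
      split_ifs
      any_goals norm_num
      all_goals exfalso
      all_goals omega
    · simp

lemma stdOmega_orth' (n : ℕ) (b c : Fin (2 * n)) :
    ∑ a, stdOmega n a b * stdOmega n a c = if b = c then 1 else 0 := by
  rw [← stdOmega_orth n b c]
  refine Finset.sum_congr rfl fun a _ => ?_
  rw [stdOmega_skew n a b, stdOmega_skew n a c]; ring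

lemma sum_antisym {ι : Type*} [Fintype ι] (F : ι → ι → ℝ) (h : ∀ a e, F a e = - F e a) :
    ∑ a, ∑ e, F a e = 0 := by
  have h1 : (∑ a, ∑ e, F a e) = ∑ e, ∑ a, F a e := Finset.sum_comm
  have h2 : (∑ e, ∑ a, F a e) = ∑ e, ∑ a, (- F e a) :=
    Finset.sum_congr rfl fun e _ => Finset.sum_congr rfl fun a _ => h a e
  have h3 : (∑ e, ∑ a, (- F e a)) = - ∑ e, ∑ a, F e a := by simp
  linarith [h1, h2, h3]

/-- Let `R` be a symplectic curvature tensor on `ℝ^{2n}`: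
antisymmetric in the first two indices, satisfying the first Bianchi identity, and
symplectic in the last two indices.  With
`Φ_{bd} := (1/(2(n+1))) ∑_a R_{ab}{}^a{}_d` and
`V_{ab}{}^c{}_d := R_{ab}{}^c{}_d − (δ_a{}^c Φ_{bd} − δ_b{}^c Φ_{ad}
  + ω_{ad} ∑_e Φ_{be} ω^{ce} − ω_{bd} ∑_e Φ_{ae} ω^{ce} + 2 ω_{ab} ∑_e Φ_{de} ω^{ce})`,
we have: (1) `Φ` is symmetric; (2) `∑_a V_{ab}{}^a{}_d = 0`;
(3) `Φ_{bd} = (1/(4(n+1))) ∑_{a,c,e} ω^{ae} R_{ae}{}^c{}_b ω_{cd}`. -/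
theorem stmt0 (n : ℕ) (hn : 1 ≤ n)
    (R : Fin (2 * n) → Fin (2 * n) → Fin (2 * n) → Fin (2 * n) → ℝ)
    -- ω^{ab}: the inverse of ω_{ab}, normalized by ∑_a ω_{ab} ω^{ac} = δ_b{}^c
    (ωInv : Fin (2 * n) → Fin (2 * n) → ℝ)
    (hInv : ∀ b c, ∑ a, stdOmega n a b * ωInv a c = if b = c then (1 : ℝ) else 0)
    -- (i)  antisymmetry
    (hskew : ∀ a b c d, R a b c d = - R b a c d)
    -- (ii) first Bianchi identity
    (hbianchi : ∀ a b c d, R a b c d + R b d c a + R d a c b = 0)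
    -- (iii) symplectic symmetry: ∑_c R_{ab}{}^c{}_d ω_{ce} = ∑_c R_{ab}{}^c{}_e ω_{cd}
    (hsympl : ∀ a b d e,
      ∑ c, R a b c d * stdOmega n c e = ∑ c, R a b c e * stdOmega n c d)
    (Φ : Fin (2 * n) → Fin (2 * n) → ℝ)
    (hΦ : ∀ b d, Φ b d = (1 / (2 * ((n : ℝ) + 1))) * ∑ a, R a b a d)
    (V : Fin (2 * n) → Fin (2 * n) → Fin (2 * n) → Fin (2 * n) → ℝ)
    (hV : ∀ a b c d, V a b c d = R a b c d -
      ((if a = c then (1 : ℝ) else 0) * Φ b d - (if b = c then (1 : ℝ) else 0) * Φ a d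
        + stdOmega n a d * ∑ e, Φ b e * ωInv c e
        - stdOmega n b d * ∑ e, Φ a e * ωInv c e
        + 2 * stdOmega n a b * ∑ e, Φ d e * ωInv c e)) :
    (∀ b d, Φ b d = Φ d b) ∧
    (∀ b d, ∑ a, V a b a d = 0) ∧
    (∀ b d, Φ b d =
      (1 / (4 * ((n : ℝ) + 1))) * ∑ a, ∑ c, ∑ e, ωInv a e * R a e c b * stdOmega n c d) := by

  have hn1 : ((n : ℝ) + 1) ≠ 0 := by positivity
  -- ωInv is the standard symplectic matrix itself
  have hωInv : ∀ a c, ωInv a c = stdOmega n a c := by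
    intro a c
    have e1 : ∑ b, stdOmega n a b * (∑ a', stdOmega n a' b * ωInv a' c)
        = ∑ b, stdOmega n a b * (if b = c then (1:ℝ) else 0) :=
      Finset.sum_congr rfl fun b _ => by rw [hInv]
    have e2 : ∑ b, stdOmega n a b * (if b = c then (1:ℝ) else 0) = stdOmega n a c := by
      simp
    have e3 : ∑ b, stdOmega n a b * (∑ a', stdOmega n a' b * ωInv a' c) = ωInv a c := by
      calc ∑ b, stdOmega n a b * (∑ a', stdOmega n a' b * ωInv a' c)
          = ∑ b, ∑ a', stdOmega n a b * stdOmega n a' b * ωInv a' c := by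
            refine Finset.sum_congr rfl fun b _ => ?_
            rw [Finset.mul_sum]
            exact Finset.sum_congr rfl fun a' _ => by ring
        _ = ∑ a', ∑ b, stdOmega n a b * stdOmega n a' b * ωInv a' c := Finset.sum_comm
        _ = ∑ a', (∑ b, stdOmega n a b * stdOmega n a' b) * ωInv a' c := by
            exact Finset.sum_congr rfl fun a' _ => (Finset.sum_mul _ _ _).symm
        _ = ∑ a', (if a = a' then (1:ℝ) else 0) * ωInv a' c := by
            exact Finset.sum_congr rfl fun a' _ => by rw [stdOmega_orth]
        _ = ωInv a c := by simp
    rw [← e3, e1, e2]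
  -- trace over third/fourth slot vanishes
  have htrace : ∀ b d, ∑ a, R b d a a = 0 := by
    intro b d
    have key : ∑ a, ∑ e, (-(stdOmega n e a) * ∑ c, R b d c a * stdOmega n c e) = 0 := by
      apply sum_antisym
      intro a e
      have hS : (∑ c, R b d c a * stdOmega n c e) = ∑ c, R b d c e * stdOmega n c a :=
        hsympl b d a e
      rw [hS, stdOmega_skew n e a]
      ring
    calc ∑ a, R b d a a
        = ∑ a, ∑ c, (if c = a then (1:ℝ) else 0) * R b d c a := by
          refine Finset.sum_congr rfl fun a _ => ?_; simp
      _ = ∑ a, ∑ c, (∑ e, stdOmega n e c * stdOmega n e a) * R b d c a := by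
          refine Finset.sum_congr rfl fun a _ => Finset.sum_congr rfl fun c _ => ?_
          rw [stdOmega_orth']
      _ = ∑ a, ∑ c, ∑ e, stdOmega n e c * stdOmega n e a * R b d c a := by
          refine Finset.sum_congr rfl fun a _ => Finset.sum_congr rfl fun c _ => ?_
          rw [Finset.sum_mul]
      _ = ∑ a, ∑ e, ∑ c, stdOmega n e c * stdOmega n e a * R b d c a := by
          exact Finset.sum_congr rfl fun a _ => Finset.sum_comm
      _ = ∑ a, ∑ e, (-(stdOmega n e a) * ∑ c, R b d c a * stdOmega n c e) := by
          refine Finset.sum_congr rfl fun a _ => Finset.sum_congr rfl fun e _ => ?_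
          rw [Finset.mul_sum]
          refine Finset.sum_congr rfl fun c _ => ?_
          rw [stdOmega_skew n e c]; ring
      _ = 0 := key
  -- symmetry of the Ricci-type trace
  have hRtr : ∀ b d, ∑ a, R a b a d = ∑ a, R a d a b := by
    intro b d
    have e1 : (∑ a, R a b a d) + (∑ a, R b d a a) + (∑ a, R d a a b) = 0 := by
      rw [← Finset.sum_add_distrib, ← Finset.sum_add_distrib]
      exact Finset.sum_eq_zero fun a _ => hbianchi a b a d
    have e2 : ∑ a, R d a a b = - ∑ a, R a d a b := by
      rw [← Finset.sum_neg_distrib]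
      exact Finset.sum_congr rfl fun a _ => hskew d a a b
    have e3 := htrace b d
    linarith
  have hΦsym : ∀ b d, Φ b d = Φ d b := fun b d => by rw [hΦ, hΦ, hRtr b d]
  -- ∑_a R a b a d = 2(n+1) Φ b d
  have hsum : ∀ b d, ∑ a, R a b a d = 2 * ((n:ℝ) + 1) * Φ b d := by
    intro b d
    rw [hΦ]
    field_simp
  refine ⟨hΦsym, ?_, ?_⟩
  · -- part 2
    intro b d
    have E1 : ∑ _a : Fin (2*n), Φ b d = (2*(n:ℝ)) * Φ b d := by
      rw [Finset.sum_const, Finset.card_univ, Fintype.card_fin, nsmul_eq_mul]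
      push_cast; ring
    have E2 : ∑ a, (if b = a then (1:ℝ) else 0) * Φ a d = Φ b d := by simp
    have E3 : ∀ (x y : Fin (2*n)) (Ψ : Fin (2*n) → ℝ),
        ∑ a, stdOmega n a x * ∑ e, Ψ e * stdOmega n a e = Ψ x := by
      intro x y Ψ
      calc ∑ a, stdOmega n a x * ∑ e, Ψ e * stdOmega n a e
          = ∑ a, ∑ e, stdOmega n a x * (Ψ e * stdOmega n a e) :=
            Finset.sum_congr rfl fun a _ => Finset.mul_sum _ _ _
        _ = ∑ e, ∑ a, stdOmega n a x * (Ψ e * stdOmega n a e) := Finset.sum_comm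
        _ = ∑ e, Ψ e * ∑ a, stdOmega n a x * stdOmega n a e := by
            refine Finset.sum_congr rfl fun e _ => ?_
            rw [Finset.mul_sum]
            exact Finset.sum_congr rfl fun a _ => by ring
        _ = ∑ e, Ψ e * (if x = e then (1:ℝ) else 0) := by
            exact Finset.sum_congr rfl fun e _ => by rw [stdOmega_orth']
        _ = Ψ x := by simp
    have E4 : ∑ a, ∑ e, Φ a e * stdOmega n a e = 0 := by
      apply sum_antisym
      intro a e
      rw [stdOmega_skew n a e, hΦsym a e]; ring
    have expand : ∑ a, V a b a d = (∑ a, R a b a d) -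
        ((∑ _a : Fin (2*n), Φ b d)
          - (∑ a, (if b = a then (1:ℝ) else 0) * Φ a d)
          + (∑ a, stdOmega n a d * ∑ e, Φ b e * stdOmega n a e)
          - (∑ a, stdOmega n b d * ∑ e, Φ a e * stdOmega n a e)
          + (∑ a, 2 * stdOmega n a b * ∑ e, Φ d e * stdOmega n a e)) := by
      simp only [hV, hωInv, if_pos rfl, if_true, one_mul, Finset.sum_sub_distrib,
        Finset.sum_add_distrib]
    have E5 : ∑ a, stdOmega n b d * ∑ e, Φ a e * stdOmega n a e = 0 := by
      rw [← Finset.mul_sum, E4, mul_zero]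
    have E6 : ∑ a, 2 * stdOmega n a b * ∑ e, Φ d e * stdOmega n a e
        = 2 * Φ d b := by
      calc ∑ a, 2 * stdOmega n a b * ∑ e, Φ d e * stdOmega n a e
          = ∑ a, 2 * (stdOmega n a b * ∑ e, Φ d e * stdOmega n a e) :=
            Finset.sum_congr rfl fun a _ => by ring
        _ = 2 * ∑ a, stdOmega n a b * ∑ e, Φ d e * stdOmega n a e := by
            rw [Finset.mul_sum]
        _ = 2 * Φ d b := by rw [E3 b b (fun e => Φ d e)]
    rw [expand, E1, E2, E3 d d (fun e => Φ b e), E5, E6, hsum b d, hΦsym d b]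
    ring
  · -- part 3
    intro b d
    simp only [hωInv]
    -- lowered Bianchi
    have TB : ∀ x y z : Fin (2*n),
        (∑ c, R x y c z * stdOmega n c d) + (∑ c, R y z c x * stdOmega n c d)
          + (∑ c, R z x c y * stdOmega n c d) = 0 := by
      intro x y z
      rw [← Finset.sum_add_distrib, ← Finset.sum_add_distrib]
      exact Finset.sum_eq_zero fun c _ =>
        by linear_combination stdOmega n c d * (hbianchi x y c z)
    -- S1
    have S1 : ∑ a, ∑ e, stdOmega n a e * ∑ c, R e b c a * stdOmega n c d
        = - (2 * ((n:ℝ) + 1) * Φ b d) := by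
      calc ∑ a, ∑ e, stdOmega n a e * ∑ c, R e b c a * stdOmega n c d
          = ∑ a, ∑ e, stdOmega n a e * ∑ c, R e b c d * stdOmega n c a := by
            refine Finset.sum_congr rfl fun a _ => Finset.sum_congr rfl fun e _ => ?_
            rw [hsympl e b a d]
        _ = ∑ a, ∑ e, ∑ c, stdOmega n a e * (R e b c d * stdOmega n c a) := by
            exact Finset.sum_congr rfl fun a _ => Finset.sum_congr rfl fun e _ =>
              Finset.mul_sum _ _ _
        _ = ∑ e, ∑ c, ∑ a, stdOmega n a e * (R e b c d * stdOmega n c a) := by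
            rw [Finset.sum_comm]
            exact Finset.sum_congr rfl fun e _ => Finset.sum_comm
        _ = ∑ e, ∑ c, R e b c d * (- (if c = e then (1:ℝ) else 0)) := by
            refine Finset.sum_congr rfl fun e _ => Finset.sum_congr rfl fun c _ => ?_
            rw [← stdOmega_orth' n c e, ← Finset.sum_neg_distrib, Finset.mul_sum]
            refine Finset.sum_congr rfl fun a _ => ?_
            rw [stdOmega_skew n c a]; ring
        _ = - ∑ e, R e b e d := by
            rw [← Finset.sum_neg_distrib]
            refine Finset.sum_congr rfl fun e _ => ?_
            have : ∑ c, R e b c d * (- (if c = e then (1:ℝ) else 0))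
                = - ∑ c, (if c = e then (1:ℝ) else 0) * R e b c d := by
              rw [← Finset.sum_neg_distrib]
              exact Finset.sum_congr rfl fun c _ => by ring
            rw [this]
            simp
        _ = - (2 * ((n:ℝ) + 1) * Φ b d) := by rw [hsum b d]
    -- S2
    have S2 : ∑ a, ∑ e, stdOmega n a e * ∑ c, R b a c e * stdOmega n c d
        = - (2 * ((n:ℝ) + 1) * Φ b d) := by
      calc ∑ a, ∑ e, stdOmega n a e * ∑ c, R b a c e * stdOmega n c d
          = ∑ a, ∑ e, stdOmega n a e * ∑ c, R b a c d * stdOmega n c e := by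
            refine Finset.sum_congr rfl fun a _ => Finset.sum_congr rfl fun e _ => ?_
            rw [hsympl b a e d]
        _ = ∑ a, ∑ e, ∑ c, stdOmega n a e * (R b a c d * stdOmega n c e) := by
            exact Finset.sum_congr rfl fun a _ => Finset.sum_congr rfl fun e _ =>
              Finset.mul_sum _ _ _
        _ = ∑ a, ∑ c, ∑ e, stdOmega n a e * (R b a c d * stdOmega n c e) := by
            exact Finset.sum_congr rfl fun a _ => Finset.sum_comm
        _ = ∑ a, ∑ c, R b a c d * (if a = c then (1:ℝ) else 0) := by
            refine Finset.sum_congr rfl fun a _ => Finset.sum_congr rfl fun c _ => ?_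
            rw [← stdOmega_orth n a c, Finset.mul_sum]
            refine Finset.sum_congr rfl fun e _ => ?_
            ring
        _ = ∑ a, R b a a d := by
            refine Finset.sum_congr rfl fun a _ => ?_
            simp
        _ = - (2 * ((n:ℝ) + 1) * Φ b d) := by
            rw [← hsum b d, ← Finset.sum_neg_distrib]
            exact Finset.sum_congr rfl fun a _ => by rw [hskew b a a d]
    -- total
    have Stot : ∑ a, ∑ c, ∑ e, stdOmega n a e * R a e c b * stdOmega n c d
        = 4 * ((n:ℝ) + 1) * Φ b d := by
      calc ∑ a, ∑ c, ∑ e, stdOmega n a e * R a e c b * stdOmega n c d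
          = ∑ a, ∑ e, ∑ c, stdOmega n a e * R a e c b * stdOmega n c d := by
            exact Finset.sum_congr rfl fun a _ => Finset.sum_comm
        _ = ∑ a, ∑ e, stdOmega n a e * ∑ c, R a e c b * stdOmega n c d := by
            refine Finset.sum_congr rfl fun a _ => Finset.sum_congr rfl fun e _ => ?_
            rw [Finset.mul_sum]
            exact Finset.sum_congr rfl fun c _ => by ring
        _ = ∑ a, ∑ e, (- (stdOmega n a e * ∑ c, R e b c a * stdOmega n c d)
              - stdOmega n a e * ∑ c, R b a c e * stdOmega n c d) := by
            refine Finset.sum_congr rfl fun a _ => Finset.sum_congr rfl fun e _ => ?_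
            have hb := TB a e b
            linear_combination stdOmega n a e * hb
        _ = (- ∑ a, ∑ e, stdOmega n a e * ∑ c, R e b c a * stdOmega n c d)
              - ∑ a, ∑ e, stdOmega n a e * ∑ c, R b a c e * stdOmega n c d := by
            simp only [Finset.sum_sub_distrib, Finset.sum_neg_distrib]
        _ = 4 * ((n:ℝ) + 1) * Φ b d := by rw [S1, S2]; ring
    rw [Stot]
    field_simp
end

section
/- Let R be a Kähler-type curvature tensor on ℝ^{2n}, with pieces U, Ξ, Σ, Λ as in the decomposition, and let V be its symplectic trace-free part, V_{ab}{}^c{}_d := R_{ab}{}^c{}_d − (δ_a{}^c Φ_{bd} − δ_b{}^c Φ_{ad} + ω_{ad} ∑_e Φ_{be} ω^{ce} − ω_{bd} ∑_e Φ_{ae} ω^{ce} + 2 ω_{ab} ∑_e Φ_{de} ω^{ce}) where Φ_{bd} := (1/(2(n+1))) ∑_a R_{ab}{}^a{}_d. Then V = 0 if and only if U = 0 and Ξ = 0, which holds if and only if R has constant holomorphic sectional curvature, i.e. R_{ab}{}^c{}_d = Λ (δ_a{}^c g_{bd} − δ_b{}^c g_{ad} + J_a{}^c J_{bd} − J_b{}^c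 J_{ad} + 2 J_{ab} J^c{}_d). -/
open Finset

/-- The standard Euclidean metric `g_{ab} = δ_{ab}` on `ℝ^{2n}` (its inverse
`g^{ab} = δ^{ab}` has the same components). -/
def gK (n : ℕ) (a b : Fin (2 * n)) : ℝ := if a = b then 1 else 0

/-- The components `J_a{}^b` of the standard complex structure on `ℝ^{2n}`:
`J e_i = e_{n+i}`, `J e_{n+i} = -e_i` for `1 ≤ i ≤ n`. -/
def Jc (n : ℕ) (a b : Fin (2 * n)) : ℝ :=
  if (a : ℕ) + n = (b : ℕ) then 1 else if (b : ℕ) + n = (a : ℕ) then -1 else 0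

/-- `J_{ab} := ∑_c J_a{}^c g_{cb}`, which is also the Kähler (symplectic) form `ω_{ab}`. -/
def Jlow (n : ℕ) (a b : Fin (2 * n)) : ℝ := ∑ c, Jc n a c * gK n c b

/-- `J^{ab} := ∑_c g^{ac} J_c{}^b`. -/
def Jupup (n : ℕ) (a b : Fin (2 * n)) : ℝ := ∑ c, gK n a c * Jc n c b

/-- `J^c{}_d := ∑_e g^{ce} J_{ed}`. -/
def Jmix (n : ℕ) (c d : Fin (2 * n)) : ℝ := ∑ e, gK n c e * Jlow n e d

/-- The tensor `U_{ab}{}^c{}_d` (with the upper index lowered by `g`,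
`U_{abed} := ∑_c U_{ab}{}^c{}_d g_{ce}`) is totally trace-free: the trace
`∑_a U_{ab}{}^a{}_d` vanishes, and every contraction of `U_{abed}` with `g^{··}`
and with `J^{··}` (equivalently `ω^{··}`) over any pair of indices vanishes. -/
def TotallyTraceFree (n : ℕ)
    (U : Fin (2 * n) → Fin (2 * n) → Fin (2 * n) → Fin (2 * n) → ℝ) : Prop :=
  let Ul : Fin (2 * n) → Fin (2 * n) → Fin (2 * n) → Fin (2 * n) → ℝ :=
    fun a b e d => ∑ c, U a b c d * gK n c e
  (∀ b d, ∑ a, U a b a d = 0) ∧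
  (∀ e d, ∑ a, ∑ b, gK n a b * Ul a b e d = 0) ∧
  (∀ b d, ∑ a, ∑ e, gK n a e * Ul a b e d = 0) ∧
  (∀ b e, ∑ a, ∑ d, gK n a d * Ul a b e d = 0) ∧
  (∀ a d, ∑ b, ∑ e, gK n b e * Ul a b e d = 0) ∧
  (∀ a e, ∑ b, ∑ d, gK n b d * Ul a b e d = 0) ∧
  (∀ a b, ∑ e, ∑ d, gK n e d * Ul a b e d = 0) ∧
  (∀ e d, ∑ a, ∑ b, Jupup n a b * Ul a b e d = 0) ∧
  (∀ b d, ∑ a, ∑ e, Jupup n a e * Ul a b e d = 0) ∧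
  (∀ b e, ∑ a, ∑ d, Jupup n a d * Ul a b e d = 0) ∧
  (∀ a d, ∑ b, ∑ e, Jupup n b e * Ul a b e d = 0) ∧
  (∀ a e, ∑ b, ∑ d, Jupup n b d * Ul a b e d = 0) ∧
  (∀ a b, ∑ e, ∑ d, Jupup n e d * Ul a b e d = 0)

/-- The curvature of Kähler type `R_{ab}{}^c{}_d` decomposes as
`R = U + (Ξ-terms) + (Σ-terms) + Λ·(constant holomorphic sectional curvature term)`. -/
def KahlerDecomp (n : ℕ)
    (R U : Fin (2 * n) → Fin (2 * n) → Fin (2 * n) → Fin (2 * n) → ℝ)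
    (Ξ Sig : Fin (2 * n) → Fin (2 * n) → ℝ) (Λ : ℝ) : Prop :=
  ∀ a b c d, R a b c d = U a b c d
    + ((if a = c then (1 : ℝ) else 0) * Ξ b d - (if b = c then (1 : ℝ) else 0) * Ξ a d
        - gK n a d * (∑ e, Ξ b e * gK n e c) + gK n b d * (∑ e, Ξ a e * gK n e c))
    + (Jc n a c * Sig b d - Jc n b c * Sig a d
        - Jlow n a d * (∑ e, Sig b e * gK n e c) + Jlow n b d * (∑ e, Sig a e * gK n e c)
        + 2 * Jlow n a b * (∑ e, gK n c e * Sig e d) + 2 * Jmix n c d * Sig a b)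
    + Λ * ((if a = c then (1 : ℝ) else 0) * gK n b d - (if b = c then (1 : ℝ) else 0) * gK n a d
        + Jc n a c * Jlow n b d - Jc n b c * Jlow n a d + 2 * Jlow n a b * Jmix n c d)

-- aux
def sg (n : ℕ) (a : Fin (2*n)) : ℝ := if (a:ℕ) < n then 1 else -1

def pr (n : ℕ) (a : Fin (2*n)) : Fin (2*n) :=
  ⟨if (a:ℕ) < n then (a:ℕ) + n else (a:ℕ) - n, by have := a.isLt; split_ifs <;> omega⟩

lemma pr_val (n : ℕ) (a : Fin (2*n)) :
    ((pr n a : Fin (2*n)) : ℕ) = if (a:ℕ) < n then (a:ℕ) + n else (a:ℕ) - n := rfl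

lemma pr_pr (n : ℕ) (a : Fin (2*n)) : pr n (pr n a) = a := by
  have := a.isLt
  simp only [Fin.ext_iff, pr_val]
  split_ifs <;> omega

lemma sg_pr (n : ℕ) (a : Fin (2*n)) : sg n (pr n a) = - sg n a := by
  have := a.isLt
  simp only [sg, pr_val]
  split_ifs <;> (try norm_num) <;> omega

lemma sg_sq (n : ℕ) (a : Fin (2*n)) : sg n a * sg n a = 1 := by
  unfold sg; split_ifs <;> norm_num

@[simp] lemma pr_inj (n : ℕ) (a b : Fin (2*n)) : pr n a = pr n b ↔ a = b :=
  ⟨fun h => by rw [← pr_pr n a, h, pr_pr], fun h => by rw [h]⟩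

lemma Jc_eq_pr (n : ℕ) (a c : Fin (2*n)) :
    Jc n a c = if c = pr n a then sg n a else 0 := by
  have ha := a.isLt; have hc := c.isLt
  simp only [Jc, sg, Fin.ext_iff, pr_val]
  split_ifs <;> (try norm_num) <;> omega

lemma Jc_eq_pr' (n : ℕ) (c b : Fin (2*n)) :
    Jc n c b = if c = pr n b then -(sg n b) else 0 := by
  rw [Jc_eq_pr]
  rcases eq_or_ne c (pr n b) with h | h
  · subst h
    simp [pr_pr, sg_pr]
  · rw [if_neg h, if_neg]
    intro hb
    exact h (by rw [hb, pr_pr])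

lemma sum_Jc (n : ℕ) (a : Fin (2*n)) (f : Fin (2*n) → ℝ) :
    ∑ c, Jc n a c * f c = sg n a * f (pr n a) := by
  simp [Jc_eq_pr, ite_mul]

lemma sum_Jc' (n : ℕ) (b : Fin (2*n)) (f : Fin (2*n) → ℝ) :
    ∑ c, f c * Jc n c b = -(sg n b * f (pr n b)) := by
  simp [Jc_eq_pr', mul_ite]; ring

@[simp] lemma Jlow_eq (n : ℕ) (a b : Fin (2*n)) : Jlow n a b = Jc n a b := by
  simp [Jlow, gK]

@[simp] lemma Jupup_eq (n : ℕ) (a b : Fin (2*n)) : Jupup n a b = Jc n a b := by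
  simp [Jupup, gK]

@[simp] lemma Jmix_eq (n : ℕ) (a b : Fin (2*n)) : Jmix n a b = Jc n a b := by
  simp [Jmix, gK]

lemma sum_pr (n : ℕ) (f : Fin (2*n) → ℝ) : ∑ a, f (pr n a) = ∑ a, f a :=
  Equiv.sum_comp (Function.Involutive.toPerm (pr n) (pr_pr n)) f

lemma sum_one (n : ℕ) : ∑ _a : Fin (2*n), (1:ℝ) = 2*(n:ℝ) := by
  simp [mul_comm]

lemma Jc_skew (n : ℕ) (a b : Fin (2*n)) : Jc n a b = - Jc n b a := by
  rw [Jc_eq_pr, show Jc n b a = if b = pr n a then -(sg n a) else 0 from Jc_eq_pr' n b a]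
  split_ifs <;> ring

@[simp] lemma Jc_self (n : ℕ) (a : Fin (2*n)) : Jc n a a = 0 := by
  have := a.isLt
  simp only [Jc]
  split_ifs <;> (try rfl) <;> omega

lemma sum_const_ite {m : ℕ} (P : Prop) [Decidable P] (f : Fin m → ℝ) :
    ∑ a, (if P then f a else 0) = if P then ∑ a, f a else 0 := by
  split_ifs <;> simp

/-- for a Kähler-type curvature tensor, the symplectic trace-free part
`V` vanishes iff `U = 0` and `Ξ = 0`, which holds iff `R` has constant holomorphic
sectional curvature. -/
theorem stmt3 (n : ℕ) (hn : 1 ≤ n)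
    (R U : Fin (2 * n) → Fin (2 * n) → Fin (2 * n) → Fin (2 * n) → ℝ)
    (Ξ Sig : Fin (2 * n) → Fin (2 * n) → ℝ) (Λ : ℝ)
    (hdec : KahlerDecomp n R U Ξ Sig Λ)
    (hU : TotallyTraceFree n U)
    (hΞsymm : ∀ a b, Ξ a b = Ξ b a)
    (hΞtrace : ∑ a, Ξ a a = 0)
    (hSig : ∀ a b, Sig a b = ∑ c, Jc n a c * Ξ b c)
    -- ω^{ab}: the inverse of ω_{ab} = J_{ab}, normalized by ∑_a ω_{ab} ω^{ac} = δ_b{}^c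
    (ωInv : Fin (2 * n) → Fin (2 * n) → ℝ)
    (hInv : ∀ b c, ∑ a, Jlow n a b * ωInv a c = if b = c then (1 : ℝ) else 0)
    -- Φ_{bd} := (1/(2(n+1))) ∑_a R_{ab}{}^a{}_d
    (Φ : Fin (2 * n) → Fin (2 * n) → ℝ)
    (hΦ : ∀ b d, Φ b d = (1 / (2 * ((n : ℝ) + 1))) * ∑ a, R a b a d)
    -- V: the symplectic trace-free part of R
    (V : Fin (2 * n) → Fin (2 * n) → Fin (2 * n) → Fin (2 * n) → ℝ)
    (hV : ∀ a b c d, V a b c d = R a b c d -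
      ((if a = c then (1 : ℝ) else 0) * Φ b d - (if b = c then (1 : ℝ) else 0) * Φ a d
        + Jlow n a d * ∑ e, Φ b e * ωInv c e
        - Jlow n b d * ∑ e, Φ a e * ωInv c e
        + 2 * Jlow n a b * ∑ e, Φ d e * ωInv c e)) :
    ((∀ a b c d, V a b c d = 0) ↔
      ((∀ a b c d, U a b c d = 0) ∧ (∀ b d, Ξ b d = 0))) ∧
    (((∀ a b c d, U a b c d = 0) ∧ (∀ b d, Ξ b d = 0)) ↔
      (∀ a b c d, R a b c d =
        Λ * ((if a = c then (1 : ℝ) else 0) * gK n b d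
          - (if b = c then (1 : ℝ) else 0) * gK n a d
          + Jc n a c * Jlow n b d - Jc n b c * Jlow n a d
          + 2 * Jlow n a b * Jmix n c d))) := by
  classical
  obtain ⟨hU1, hU2, hU3, hU4, hU5, hU6, hU7, hU8, hU9, hU10, hU11, hU12, hU13⟩ := hU
  have hU4' : ∀ b e, ∑ a, U a b e a = 0 := by
    intro b e
    have h := hU4 b e
    simpa [gK] using h
  have hSig' : ∀ a b, Sig a b = sg n a * Ξ b (pr n a) := by
    intro a b; rw [hSig, sum_Jc]
  have hsgsq : ∀ a : Fin (2*n), sg n a * sg n a = 1 := sg_sq n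
  have hω : ∀ a c, ωInv a c = Jc n a c := by
    intro a c
    have h2 : sg n a * ωInv a c = if pr n a = c then 1 else 0 := by
      have h := hInv (pr n a) c
      simp only [Jlow_eq] at h
      have h3 : ∑ x, Jc n x (pr n a) * ωInv x c
          = -(sg n (pr n a) * ωInv (pr n (pr n a)) c) := by
        rw [← sum_Jc' n (pr n a) (fun x => ωInv x c)]
        exact Finset.sum_congr rfl fun x _ => mul_comm _ _
      rw [h3, sg_pr, pr_pr] at h
      linarith [h]
    rw [Jc_eq_pr]
    rcases eq_or_ne c (pr n a) with hc | hc
    · rw [if_pos hc]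
      rw [if_pos hc.symm] at h2
      have hs := hsgsq a
      linear_combination sg n a * h2 - ωInv a c * hs
    · rw [if_neg hc]
      rw [if_neg (fun h => hc h.symm)] at h2
      have hs := hsgsq a
      linear_combination sg n a * h2 - ωInv a c * hs
  have hdec' : ∀ a b c d, R a b c d = U a b c d
      + ((if a = c then (1:ℝ) else 0) * Ξ b d - (if b = c then (1:ℝ) else 0) * Ξ a d
        - (if a = d then (1:ℝ) else 0) * Ξ b c + (if b = d then (1:ℝ) else 0) * Ξ a c)
      + (Jc n a c * Sig b d - Jc n b c * Sig a d - Jc n a d * Sig b c + Jc n b d * Sig a c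
        + 2 * Jc n a b * Sig c d + 2 * Jc n c d * Sig a b)
      + Λ * ((if a = c then (1:ℝ) else 0) * (if b = d then (1:ℝ) else 0)
        - (if b = c then (1:ℝ) else 0) * (if a = d then (1:ℝ) else 0)
        + Jc n a c * Jc n b d - Jc n b c * Jc n a d + 2 * Jc n a b * Jc n c d) := by
    intro a b c d
    have h := hdec a b c d
    simp only [gK, Jlow_eq, Jmix_eq, mul_ite, ite_mul, one_mul, mul_one, zero_mul, mul_zero,
      Finset.sum_ite_eq, Finset.sum_ite_eq', Finset.mem_univ, if_true] at h ⊢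
    exact h
  have hV' : ∀ a b c d, V a b c d = R a b c d -
      ((if a = c then (1:ℝ) else 0) * Φ b d - (if b = c then (1:ℝ) else 0) * Φ a d
        + Jc n a d * (sg n c * Φ b (pr n c))
        - Jc n b d * (sg n c * Φ a (pr n c))
        + 2 * Jc n a b * (sg n c * Φ d (pr n c))) := by
    intro a b c d
    have hs : ∀ x, (∑ e, Φ x e * ωInv c e) = sg n c * Φ x (pr n c) := by
      intro x
      calc ∑ e, Φ x e * ωInv c e = ∑ e, Jc n c e * Φ x e :=
            Finset.sum_congr rfl fun e _ => by rw [hω, mul_comm]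
        _ = sg n c * Φ x (pr n c) := sum_Jc n c _
    rw [hV a b c d, hs, hs, hs]
    simp only [Jlow_eq]
  have trS : ∑ x, sg n x * Ξ x (pr n x) = 0 := by
    have h2 : ∀ a : Fin (2*n), sg n (pr n a) * Ξ (pr n a) (pr n (pr n a))
        = -(sg n a * Ξ a (pr n a)) := by
      intro a
      rw [sg_pr, pr_pr, hΞsymm (pr n a) a]
      ring
    have h1 : ∑ x, sg n x * Ξ x (pr n x)
        = ∑ x, sg n (pr n x) * Ξ (pr n x) (pr n (pr n x)) :=
      (sum_pr n (fun a => sg n a * Ξ a (pr n a))).symm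
    have h3 : ∑ x, sg n x * Ξ x (pr n x) = - ∑ x, sg n x * Ξ x (pr n x) := by
      conv_lhs => rw [h1, Finset.sum_congr rfl fun a _ => h2 a, Finset.sum_neg_distrib]
    linarith
  set Q : Fin (2*n) → Fin (2*n) → ℝ :=
    fun b d => -(sg n d * (sg n b * Ξ (pr n d) (pr n b))) with hQdef
  have hctr1 : ∀ b d, ∑ a, R a b a d = (2*(n:ℝ)+3) * Ξ b d - Q b d
      + (2*(n:ℝ)+2) * Λ * (if b = d then (1:ℝ) else 0) := by
    intro b d
    have step : ∀ a, R a b a d = U a b a d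
        + ((if a = a then (1:ℝ) else 0) * Ξ b d - (if b = a then (1:ℝ) else 0) * Ξ a d
          - (if a = d then (1:ℝ) else 0) * Ξ b a + (if b = d then (1:ℝ) else 0) * Ξ a a)
        + (- (Jc n b a * Sig a d) + Jc n d a * Sig b a + Jc n b d * Sig a a
          - 2 * (Jc n b a * Sig a d) - 2 * (Jc n d a * Sig a b))
        + Λ * ((if a = a then (1:ℝ) else 0) * (if b = d then (1:ℝ) else 0)
          - (if b = a then (1:ℝ) else 0) * (if a = d then (1:ℝ) else 0)
          + 3 * (Jc n b a * Jc n d a)) := by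
      intro a
      rw [hdec' a b a d, Jc_skew n a d, Jc_skew n a b, Jc_self]
      ring
    rw [Finset.sum_congr rfl fun a _ => step a]
    simp only [hSig', Jc_eq_pr, hQdef, mul_ite, ite_mul, one_mul, mul_one, zero_mul, mul_zero,
      neg_mul, mul_neg, neg_neg, neg_zero,
      Finset.sum_add_distrib, Finset.sum_sub_distrib, Finset.sum_neg_distrib,
      ← Finset.mul_sum, sum_const_ite,
      Finset.sum_ite_eq, Finset.sum_ite_eq', Finset.mem_univ, if_true,
      pr_pr, sg_pr, pr_inj, eq_self_iff_true,
      Finset.sum_const, Finset.card_univ, Fintype.card_fin, nsmul_eq_mul,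
      hU1, hΞtrace, trS]
    rw [hΞsymm d b]
    by_cases hbd : b = d
    · subst hbd
      simp only [if_pos rfl, ite_self]
      simp only [sg]
      split_ifs <;> push_cast <;> ring
    · simp only [if_neg hbd, if_neg (fun h : d = b => hbd h.symm), ite_self]
      simp only [sg]
      split_ifs <;> push_cast <;> ring
  have hnR : (1:ℝ) ≤ (n:ℝ) := by exact_mod_cast hn
  have hden : (2*(n:ℝ)+2) ≠ 0 := by positivity
  have hΦ'' : ∀ b d, (2*(n:ℝ)+2) * Φ b d = (2*(n:ℝ)+3) * Ξ b d - Q b d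
      + (2*(n:ℝ)+2) * Λ * (if b = d then (1:ℝ) else 0) := by
    intro b d
    rw [hΦ b d, hctr1 b d]
    have h2 : 2*((n:ℝ)+1) ≠ 0 := by positivity
    field_simp
  have hQdiag : ∀ a : Fin (2*n), Q a a = -(Ξ (pr n a) (pr n a)) := by
    intro a
    simp only [hQdef]
    linear_combination (-(Ξ (pr n a) (pr n a))) * sg_sq n a
  have trQ : ∑ a, Q a a = 0 := by
    rw [Finset.sum_congr rfl fun a _ => hQdiag a, Finset.sum_neg_distrib,
      sum_pr n (fun a => Ξ a a), hΞtrace, neg_zero]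
  have trΦ : ∑ a, Φ a a = 2*(n:ℝ)*Λ := by
    have h2 : ∑ a, (2*(n:ℝ)+2) * Φ a a
        = ∑ a, ((2*(n:ℝ)+3) * Ξ a a - Q a a + (2*(n:ℝ)+2) * Λ * (if a = a then (1:ℝ) else 0)) :=
      Finset.sum_congr rfl fun a _ => hΦ'' a a
    simp only [eq_self_iff_true, if_true, mul_one, Finset.sum_add_distrib,
      Finset.sum_sub_distrib, ← Finset.mul_sum, hΞtrace, trQ, mul_zero, sub_zero, zero_add,
      Finset.sum_const, Finset.card_univ, Fintype.card_fin, nsmul_eq_mul] at h2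
    have h3 : (2*(n:ℝ)+2) * (∑ a, Φ a a) = (2*(n:ℝ)+2) * (2*(n:ℝ)*Λ) := by
      push_cast at h2 ⊢; linarith [h2]
    exact mul_left_cancel₀ hden h3
  have hctr2 : ∀ b c, ∑ a, V a b c a =
      -(2*(n:ℝ)+1) * Ξ b c + 3 * Q b c - (2*(n:ℝ)+2) * Λ * (if b = c then (1:ℝ) else 0)
      - (Φ b c - 2*(n:ℝ)*Λ * (if b = c then (1:ℝ) else 0)
         - 3 * (sg n b * (sg n c * Φ (pr n b) (pr n c)))) := by
    intro b c
    have step : ∀ a, V a b c a = U a b c a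
        + ((if a = c then (1:ℝ) else 0) * Ξ b a - (if b = c then (1:ℝ) else 0) * Ξ a a
          - (if a = a then (1:ℝ) else 0) * Ξ b c + (if b = a then (1:ℝ) else 0) * Ξ a c)
        + (- (Jc n c a * Sig b a) - Jc n b c * Sig a a + Jc n b a * Sig a c
          - 2 * (Jc n b a * Sig c a) + 2 * (Jc n c a * Sig a b))
        + Λ * ((if a = c then (1:ℝ) else 0) * (if b = a then (1:ℝ) else 0)
          - (if b = c then (1:ℝ) else 0) * (if a = a then (1:ℝ) else 0)
          - Jc n c a * Jc n b a - 2 * (Jc n b a * Jc n c a))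
        - ((if a = c then (1:ℝ) else 0) * Φ b a - (if b = c then (1:ℝ) else 0) * Φ a a
          - Jc n b a * (sg n c * Φ a (pr n c)) - 2 * (Jc n b a * (sg n c * Φ a (pr n c)))) := by
      intro a
      rw [hV' a b c a, hdec' a b c a, Jc_skew n a c, Jc_skew n a b, Jc_self]
      ring
    rw [Finset.sum_congr rfl fun a _ => step a]
    simp only [hSig', Jc_eq_pr, hQdef, mul_ite, ite_mul, one_mul, mul_one, zero_mul, mul_zero,
      neg_mul, mul_neg, neg_neg, neg_zero,
      Finset.sum_add_distrib, Finset.sum_sub_distrib, Finset.sum_neg_distrib,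
      ← Finset.mul_sum, sum_const_ite,
      Finset.sum_ite_eq, Finset.sum_ite_eq', Finset.mem_univ, if_true,
      pr_pr, sg_pr, pr_inj, eq_self_iff_true,
      Finset.sum_const, Finset.card_univ, Fintype.card_fin, nsmul_eq_mul,
      hU4', hΞtrace, trS, trΦ]
    rw [hΞsymm c b, hΞsymm (pr n b) (pr n c)]
    by_cases hbd : b = c
    · subst hbd
      simp only [if_pos rfl, ite_self]
      simp only [sg]
      split_ifs <;> push_cast <;> ring
    · simp only [if_neg hbd, if_neg (fun h : c = b => hbd h.symm), ite_self]
      simp only [sg]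
      split_ifs <;> push_cast <;> ring
  have hW : ∀ b c, (2*(n:ℝ)+2) * (sg n b * (sg n c * Φ (pr n b) (pr n c)))
      = Ξ b c - (2*(n:ℝ)+3) * Q b c + (2*(n:ℝ)+2) * Λ * (if b = c then (1:ℝ) else 0) := by
    intro b c
    have h := hΦ'' (pr n b) (pr n c)
    simp only [hQdef, pr_pr, sg_pr, pr_inj, neg_mul, mul_neg, neg_neg, if_true] at h ⊢
    rw [hΞsymm c b, hΞsymm (pr n b) (pr n c)] at h
    by_cases hbd : b = c
    · subst hbd
      simp only [if_pos rfl, if_true] at h ⊢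
      linear_combination (sg n b * sg n b) * h
        + ((sg n b * sg n b + 1) * Ξ b b + (2*(n:ℝ)+2)*Λ) * sg_sq n b
    · rw [if_neg hbd] at h ⊢
      linear_combination (sg n b * sg n c) * h
        + (sg n c * sg n c * Ξ b c) * sg_sq n b + (Ξ b c) * sg_sq n c
  have conj : ∀ μ : ℝ, (∀ b c, Q b c = μ * Ξ b c) → ∀ b c, (μ^2 - 1) * Ξ b c = 0 := by
    intro μ hμ b c
    have h1 := hμ b c
    have h2 := hμ (pr n b) (pr n c)
    simp only [hQdef, pr_pr, sg_pr, neg_mul, mul_neg, neg_neg] at h1 h2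
    rw [hΞsymm c b, hΞsymm (pr n b) (pr n c)] at h2
    linear_combination (-μ)*h1 + (sg n b * sg n c)*h2
      + (sg n c * sg n c * Ξ b c)*sg_sq n b + (Ξ b c)*sg_sq n c
  have hfac : ∀ μ : ℝ, μ^2 - 1 ≠ 0 → (∀ b c, Q b c = μ * Ξ b c) → ∀ b c, Ξ b c = 0 := by
    intro μ hne hμ b c
    rcases mul_eq_zero.mp (conj μ hμ b c) with h' | h'
    · exact absurd h' hne
    · exact h'
  have hVU : (∀ x y, Ξ x y = 0) → ∀ a b c d, V a b c d = U a b c d := by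
    intro hΞ0 a b c d
    have hSig0 : ∀ x y, Sig x y = 0 := fun x y => by rw [hSig' x y, hΞ0, mul_zero]
    have hQ0 : ∀ x y, Q x y = 0 := fun x y => by simp [hQdef, hΞ0]
    have hΦΛ : ∀ x y, Φ x y = Λ * (if x = y then (1:ℝ) else 0) := by
      intro x y
      have h := hΦ'' x y
      rw [hΞ0, hQ0] at h
      exact mul_left_cancel₀ hden (by linear_combination h)
    have hΨ : ∀ x, sg n c * Φ x (pr n c) = Λ * Jc n c x := by
      intro x
      rw [hΦΛ, Jc_eq_pr]
      split_ifs <;> ring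
    rw [hV' a b c d, hdec' a b c d]
    simp only [hΞ0, hSig0, mul_zero, zero_mul, sub_zero, add_zero, zero_add]
    rw [hΦΛ b d, hΦΛ a d, hΨ b, hΨ a, hΨ d]
    linear_combination (Λ * Jc n b d) * Jc_skew n a c - (Λ * Jc n a d) * Jc_skew n b c
  refine ⟨⟨?_, ?_⟩, ?_, ?_⟩
  · intro hV0
    have hQμ : ∀ b c, Q b c = -(2*(n:ℝ)^2+4*(n:ℝ)+1) * Ξ b c := by
      intro b c
      have E : ∑ a, V a b c a = 0 := by simp [hV0]
      have E2 := (hctr2 b c).symm.trans E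
      have A := hΦ'' b c
      have W := hW b c
      linear_combination (-((n:ℝ)+1)) * E2 + (-1/2 : ℝ) * A + (3/2 : ℝ) * W
    have hne : (-(2*(n:ℝ)^2+4*(n:ℝ)+1))^2 - 1 ≠ 0 := by nlinarith [hnR]
    have hΞ0 := hfac _ hne hQμ
    exact ⟨fun a b c d => by rw [← hVU hΞ0 a b c d, hV0], hΞ0⟩
  · rintro ⟨hU0, hΞ0⟩ a b c d
    rw [hVU hΞ0 a b c d, hU0]
  · rintro ⟨hU0, hΞ0⟩ a b c d
    have hSig0 : ∀ x y, Sig x y = 0 := fun x y => by rw [hSig' x y, hΞ0, mul_zero]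
    rw [hdec' a b c d]
    simp only [hU0, hΞ0, hSig0, mul_zero, zero_mul, sub_zero, add_zero, zero_add,
      gK, Jlow_eq, Jmix_eq]
  · intro hR
    have hRsum : ∀ b d, ∑ a, R a b a d = (2*(n:ℝ)+2) * Λ * (if b = d then (1:ℝ) else 0) := by
      intro b d
      have step : ∀ a, R a b a d
          = Λ * ((if a = a then (1:ℝ) else 0) * (if b = d then (1:ℝ) else 0)
            - (if b = a then (1:ℝ) else 0) * (if a = d then (1:ℝ) else 0)
            + 3 * (Jc n b a * Jc n d a)) := by
        intro a
        rw [hR a b a d]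
        simp only [gK, Jlow_eq, Jmix_eq]
        rw [Jc_skew n a d, Jc_skew n a b, Jc_self]
        ring
      rw [Finset.sum_congr rfl fun a _ => step a]
      simp only [Jc_eq_pr, mul_ite, ite_mul, one_mul, mul_one, zero_mul, mul_zero,
        neg_mul, mul_neg, neg_neg, neg_zero,
        Finset.sum_add_distrib, Finset.sum_sub_distrib, Finset.sum_neg_distrib,
        ← Finset.mul_sum, sum_const_ite,
        Finset.sum_ite_eq, Finset.sum_ite_eq', Finset.mem_univ, if_true,
        pr_pr, sg_pr, pr_inj, eq_self_iff_true,
        Finset.sum_const, Finset.card_univ, Fintype.card_fin, nsmul_eq_mul]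
      by_cases hbd : b = d
      · subst hbd
        simp only [if_pos rfl, ite_self]
        simp only [sg]
        split_ifs <;> push_cast <;> ring
      · simp only [if_neg hbd, if_neg (fun h : d = b => hbd h.symm), ite_self]
        ring
    have hQμ : ∀ b d, Q b d = (2*(n:ℝ)+3) * Ξ b d := by
      intro b d
      have h3 := (hctr1 b d).symm.trans (hRsum b d)
      linarith [h3]
    have hne : (2*(n:ℝ)+3)^2 - 1 ≠ 0 := by nlinarith [hnR]
    have hΞ0 := hfac _ hne hQμ
    refine ⟨fun a b c d => ?_, hΞ0⟩
    have hSig0 : ∀ x y, Sig x y = 0 := fun x y => by rw [hSig' x y, hΞ0, mul_zero]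
    have h := hdec' a b c d
    have h2 := hR a b c d
    simp only [hΞ0, hSig0, mul_zero, zero_mul, sub_zero, add_zero, zero_add] at h
    simp only [gK, Jlow_eq, Jmix_eq] at h2
    linear_combination h2 - h
end
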